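/- arXiv:1210.2457 — 2 statements merged into one kernel-verified Lean document; each statement's English description precedes it below -/
import Mathlib

section
/- Let w ∈ V⁺ be a nonempty finite word with LAR(w) = v_k v_{k−1} ⋯ v_1, and suppose Score_F(w) > 0 with F = {v_1, …, v_i}. Then Acc_F(w) ∈ {∅} ∪ { {v_1, …, v_j} : j < i }. -/
variable {V : Type*}

/-- One step of the score/accumulator update: reading letter `v` after having
score/accumulator pair `s` for the set `F`. -/
def mgStep [DecidableEq V] (F : Finset V) (s : ℕ × Finset V) (v : V) : ℕ × Finset V :=
  if v ∈ F then
    if s.2 = F.erase v then (s.1 + 1, (∅ : Finset V)) else (s.1, insert v s.2)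
  else (0, (∅ : Finset V))

/-- `scoreAcc F w = (Score_F(w), Acc_F(w))` for a (nonempty) finite word `w`. -/
def scoreAcc [DecidableEq V] (F : Finset V) (w : List V) : ℕ × Finset V :=
  w.foldl (mgStep F) (0, ∅)

variable {V : Type*}

/-- One step of the latest-appearance-record update. -/
def larStep [DecidableEq V] (ℓ : List V) (v : V) : List V := ℓ.erase v ++ [v]

/-- The latest appearance record `LAR(w)` of a finite word. -/
def LARof [DecidableEq V] (w : List V) : List V := w.foldl larStep []

/-! The accumulator is reset to `∅` or grows by the letter just read, which the LAR moves to
its end; so the accumulator is always the letter set of a suffix of the LAR. It never equals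
`F`, because the letter that would complete `F` triggers a reset instead. Hence a nonempty
accumulator is the letter set of a suffix with fewer than `#F ≤ i` letters. -/

theorem List.IsSuffix.erase_of_nodup {α : Type*} [DecidableEq α] {t l : List α}
    (h : t <:+ l) (hl : l.Nodup) (a : α) : t.erase a <:+ l.erase a := by
  obtain ⟨p, rfl⟩ := h
  by_cases hap : a ∈ p
  · have hat : a ∉ t := List.disjoint_of_nodup_append hl hap
    rw [List.erase_append_left _ hap, List.erase_of_not_mem hat]
    exact List.suffix_append _ _
  · rw [List.erase_append_right _ hap]
    exact List.suffix_append _ _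

theorem List.Nodup.toFinset_erase_append_singleton {α : Type*} [DecidableEq α] {t : List α}
    (ht : t.Nodup) (a : α) : (t.erase a ++ [a]).toFinset = insert a t.toFinset := by
  ext b
  simp only [List.toFinset_append, Finset.mem_union, List.mem_toFinset, ht.mem_erase_iff,
    List.toFinset_cons, List.toFinset_nil, Finset.mem_insert, Finset.notMem_empty, or_false]
  tauto

section

variable [DecidableEq V]

@[simp]
theorem scoreAcc_append_singleton (F : Finset V) (w : List V) (v : V) :
    scoreAcc F (w ++ [v]) = mgStep F (scoreAcc F w) v := by
  simp [scoreAcc]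

@[simp]
theorem LARof_append_singleton (w : List V) (v : V) :
    LARof (w ++ [v]) = (LARof w).erase v ++ [v] := by
  simp [LARof, larStep]

theorem nodup_LARof (w : List V) : (LARof w).Nodup := by
  induction w using List.reverseRecOn with
  | nil => simp [LARof]
  | append_singleton w v ih =>
    rw [LARof_append_singleton, List.nodup_append]
    exact ⟨ih.erase v, List.nodup_singleton v,
      by simpa using fun _ ha h => ih.not_mem_erase (h ▸ ha)⟩

theorem mgStep_snd_eq_empty_or_ssubset (F : Finset V) {s : ℕ × Finset V}
    (hs : s.2 = ∅ ∨ s.2 ⊂ F) (v : V) : (mgStep F s v).2 = ∅ ∨ (mgStep F s v).2 ⊂ F := by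
  unfold mgStep
  split_ifs with hvF hfull
  · exact .inl rfl
  · refine .inr (Finset.ssubset_iff_subset_ne.2 ⟨?_, fun hF => hfull ?_⟩)
    · exact Finset.insert_subset hvF (hs.elim (fun h => h ▸ Finset.empty_subset F) (·.subset))
    · by_cases hv : v ∈ s.2
      · rcases hs with hempty | hssub
        · simp [hempty] at hv
        · exact absurd (Finset.insert_eq_of_mem hv ▸ hF) hssub.ne
      · rw [← hF, Finset.erase_insert hv]
  · exact .inl rfl

theorem scoreAcc_snd_eq_empty_or_ssubset (F : Finset V) (w : List V) :
    (scoreAcc F w).2 = ∅ ∨ (scoreAcc F w).2 ⊂ F := by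
  induction w using List.reverseRecOn with
  | nil => exact .inl rfl
  | append_singleton w v ih =>
    rw [scoreAcc_append_singleton]
    exact mgStep_snd_eq_empty_or_ssubset F ih v

theorem exists_isSuffix_LARof_scoreAcc_snd_eq_toFinset (F : Finset V) (w : List V) :
    ∃ t, t <:+ LARof w ∧ (scoreAcc F w).2 = t.toFinset := by
  induction w using List.reverseRecOn with
  | nil => exact ⟨[], List.nil_suffix, rfl⟩
  | append_singleton w v ih =>
    obtain ⟨t, ht, hacc⟩ := ih
    simp only [scoreAcc_append_singleton, LARof_append_singleton, mgStep]
    split_ifs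
    · exact ⟨[], List.nil_suffix, rfl⟩
    · refine ⟨t.erase v ++ [v],
        List.suffix_append_self_iff.2 (ht.erase_of_nodup (nodup_LARof w) v), ?_⟩
      rw [hacc, (ht.nodup (nodup_LARof w)).toFinset_erase_append_singleton]
    · exact ⟨[], List.nil_suffix, rfl⟩

end

theorem acc_of_score_pos_general [DecidableEq V] (w : List V) (i : ℕ) (F : Finset V)
    (hF : F = ((LARof w).drop ((LARof w).length - i)).toFinset) :
    (scoreAcc F w).2 = ∅ ∨
      ∃ j, 1 ≤ j ∧ j < i ∧
        (scoreAcc F w).2 = ((LARof w).drop ((LARof w).length - j)).toFinset := by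
  obtain ⟨t, hsuf, hacc⟩ := exists_isSuffix_LARof_scoreAcc_snd_eq_toFinset F w
  rcases (scoreAcc F w).2.eq_empty_or_nonempty with hempty | hne
  · exact .inl hempty
  have hssub := (scoreAcc_snd_eq_empty_or_ssubset F w).resolve_left hne.ne_empty
  refine .inr ⟨t.length, ?_, ?_, hacc.trans (congrArg _ (List.suffix_iff_eq_drop.1 hsuf))⟩
  · exact List.length_pos_iff.2 fun ht => by simp [hacc, ht] at hne
  · calc t.length = (scoreAcc F w).2.card := by
          rw [hacc, List.toFinset_card_of_nodup (hsuf.nodup (nodup_LARof w))]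
      _ < F.card := Finset.card_lt_card hssub
      _ ≤ ((LARof w).drop ((LARof w).length - i)).length := hF ▸ List.toFinset_card_le _
      _ ≤ i := by rw [List.length_drop]; omega

/-- If `LAR(w) = v_k ⋯ v_1`, `Score_F(w) > 0` and
`F = {v_1, …, v_i}`, then `Acc_F(w)` is either empty or equal to
`{v_1, …, v_j}` for some `j < i`. -/
theorem acc_of_score_pos [DecidableEq V] (w : List V) (hw : w ≠ []) (i : ℕ)
    (h1 : 1 ≤ i) (hik : i ≤ (LARof w).length) (F : Finset V)
    (hF : F = ((LARof w).drop ((LARof w).length - i)).toFinset)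
    (hpos : 0 < (scoreAcc F w).1) :
    (scoreAcc F w).2 = ∅ ∨
      ∃ j, 1 ≤ j ∧ j < i ∧
        (scoreAcc F w).2 = ((LARof w).drop ((LARof w).length - j)).toFinset :=
  acc_of_score_pos_general w i F hF
end

section
/- Let G = (A, Win) be a game with vertex set V that is safety reducible with language L(𝔄) for a DFA 𝔄 = (Q, V, q_0, δ, F_𝔄), and let G' = (A × 𝔄, V × F_𝔄) be the associated safety game on the product arena. Then (1) for every vertex v: v ∈ W_0(G) if and only if (v, δ(q_0, v)) ∈ W_0(G'); and (2) Player 0 has a finite-state winning strategy from W_0(G) with memory states Q. -/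
/-- An arena: a directed graph without terminal vertices, with the positions `V0`
of Player 0; Player 1's positions are the complement. -/
structure Arena (V : Type*) where
  V0 : Set V
  E : V → V → Prop
  succ : ∀ v, ∃ u, E v u

/-- The positions of Player `i`. -/
def Arena.pos (A : Arena V) (i : Fin 2) : Set V := if i = 0 then A.V0 else A.V0ᶜ

/-- An infinite play in the arena. -/
def IsPlay (A : Arena V) (ρ : ℕ → V) : Prop := ∀ n, A.E (ρ n) (ρ (n + 1))

/-- The prefix `ρ_0 ⋯ ρ_{n-1}` (of length `n`) of an infinite word. -/
def prefixList (ρ : ℕ → V) (n : ℕ) : List V := (List.range n).map ρ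

/-- The set of letters occurring infinitely often. -/
def infSet (ρ : ℕ → V) : Set V := {v | ∀ N, ∃ n, N ≤ n ∧ ρ n = v}

/-- The infinity set as a finset. -/
noncomputable def infFinset [Fintype V] (ρ : ℕ → V) : Finset V :=
  (Set.toFinite (infSet ρ)).toFinset

/-- A loop: a strongly connected subset, i.e. any two of its vertices are joined
by a path visiting only vertices of the set. -/
def IsLoop (A : Arena V) (C : Set V) : Prop :=
  ∀ u ∈ C, ∀ u' ∈ C, Relation.ReflTransGen (fun a b => A.E a b ∧ a ∈ C ∧ b ∈ C) u u'

/-- A strategy, given as a function from (history, current vertex) to the next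
vertex, which must move along an edge. -/
def IsStrat (A : Arena V) (σ : List V → V → V) : Prop := ∀ w v, A.E v (σ w v)

/-- A play consistent with the strategy `σ` of Player `i`. -/
def ConsWith (A : Arena V) (i : Fin 2) (σ : List V → V → V) (ρ : ℕ → V) : Prop :=
  IsPlay A ρ ∧ ∀ n, ρ n ∈ A.pos i → ρ (n + 1) = σ (prefixList ρ n) (ρ n)

/-- The winning region of Player `i` in the Muller game on `A` with winning
families `Fam 0`, `Fam 1`. -/
def MullerWinRegion [Fintype V] [DecidableEq V] (A : Arena V)
    (Fam : Fin 2 → Set (Finset V)) (i : Fin 2) : Set V :=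
  {v | ∃ σ, IsStrat A σ ∧ ∀ ρ, ρ 0 = v → ConsWith A i σ ρ → infFinset ρ ∈ Fam i}

/-- `memState init upd w v` is the memory state `upd*(w · v)` reached after the
play prefix `w · v`. -/
def memState {M : Type*} (init : V → M) (upd : M → V → M) : List V → V → M
  | [], v => init v
  | a :: l, v => upd (l.foldl upd (init a)) v

/-- The expanded arena `A × M` of an arena and a memory structure. -/
def prodArena {M : Type*} (A : Arena V) (upd : M → V → M) : Arena (V × M) where
  V0 := {p | p.1 ∈ A.V0}
  E p q := A.E p.1 q.1 ∧ upd p.2 q.1 = q.2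
  succ p := by
    obtain ⟨u, hu⟩ := A.succ p.1
    exact ⟨(u, upd p.2 u), hu, rfl⟩

/-- The extended play in `A × M` of a play in `A`. -/
def extPlay {M : Type*} (init : V → M) (upd : M → V → M) (ρ : ℕ → V) : ℕ → V × M :=
  fun n => (ρ n, memState init upd (prefixList ρ n) (ρ n))

/-- A play is winning for Player `i` iff it lies in `Win` (for `i = 0`), resp.
outside `Win` (for `i = 1`). -/
def WinFor {α : Type*} (Win : Set (ℕ → α)) (i : Fin 2) (ρ : ℕ → α) : Prop :=
  if i = 0 then ρ ∈ Win else ρ ∉ Win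

/-- The winning region of Player 0 in the game `(A, Win)`. -/
def GameWin0 (A : Arena V) (Win : Set (ℕ → V)) : Set V :=
  {v | ∃ σ, IsStrat A σ ∧ ∀ ρ, ρ 0 = v → ConsWith A 0 σ ρ → ρ ∈ Win}

/-! Every prefix of a play determines the run of `𝔄` on it, so plays of `A` correspond to plays
of `A × 𝔄` starting in `(v, δ q0 v)`. By safety reducibility, a winning strategy in `G` keeps
this run inside `Facc`, hence wins `G'`; conversely a play whose run stays inside `Facc` is won.
The winning region of a game whose winning condition is closed under suffixes is a trap for
Player 1 that Player 0 can stay in by a positional strategy. For `G'` this strategy wins, and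
read back in `A` it is a strategy with memory `Q` updated by `δ`. -/

section Plays

variable {α : Type*}

lemma prefixList_succ (ρ : ℕ → α) (n : ℕ) :
    prefixList ρ (n + 1) = prefixList ρ n ++ [ρ n] := by
  simp [prefixList, List.range_succ]

def seqCons (p : α) (τ : ℕ → α) : ℕ → α
  | 0 => p
  | n + 1 => τ n

lemma prefixList_seqCons (p : α) (τ : ℕ → α) (n : ℕ) :
    prefixList (seqCons p τ) (n + 1) = p :: prefixList τ n := by
  induction n with
  | zero => rfl
  | succ n ih => rw [prefixList_succ, ih, prefixList_succ]; rfl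

lemma map_prefixList {β : Type*} (f : α → β) (ρ : ℕ → α) (n : ℕ) :
    (prefixList ρ n).map f = prefixList (f ∘ ρ) n :=
  List.map_map ..

lemma exists_consWith (A : Arena α) {σ : List α → α → α} (hσ : IsStrat A σ) (v : α) :
    ∃ ρ, ρ 0 = v ∧ ConsWith A 0 σ ρ := by
  classical
  let step : List α × α → List α × α := fun p =>
    (p.1 ++ [p.2], if p.2 ∈ A.pos 0 then σ p.1 p.2 else (A.succ p.2).choose)
  let ρ : ℕ → α := fun n => (Stream'.iterate step ([], v) n).2
  have hhist : ∀ n, (Stream'.iterate step ([], v) n).1 = prefixList ρ n := by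
    intro n
    induction n with
    | zero => rfl
    | succ n ih => rw [prefixList_succ, ← ih]; rfl
  have hnext : ∀ n, ρ (n + 1) =
      if ρ n ∈ A.pos 0 then σ (prefixList ρ n) (ρ n) else (A.succ (ρ n)).choose := by
    intro n
    rw [← hhist]
    rfl
  refine ⟨ρ, rfl, fun n => ?_, fun n hn => (hnext n).trans (if_pos hn)⟩
  rw [hnext n]
  split
  · exact hσ _ _
  · exact (A.succ _).choose_spec

variable {A : Arena α} {Win : Set (ℕ → α)}

lemma mem_gameWin0_of_edge (hWin : ∀ ρ ∈ Win, (fun n => ρ (n + 1)) ∈ Win)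
    {σ : List α → α → α} (hσ : IsStrat A σ) {p u : α}
    (hwin : ∀ ρ, ρ 0 = p → ConsWith A 0 σ ρ → ρ ∈ Win)
    (hpu : A.E p u) (hmove : p ∈ A.pos 0 → u = σ [] p) : u ∈ GameWin0 A Win := by
  refine ⟨fun w => σ (p :: w), fun w => hσ (p :: w), fun τ hτ hcons =>
    hWin _ (hwin (seqCons p τ) rfl ⟨?_, ?_⟩)⟩
  · rintro (_ | n)
    · subst hτ
      exact hpu
    · exact hcons.1 n
  · rintro (_ | n) hn
    · subst hτ
      exact hmove hn
    · rw [prefixList_seqCons]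
      exact hcons.2 n hn

lemma exists_positional_forall_mem_gameWin0 (hWin : ∀ ρ ∈ Win, (fun n => ρ (n + 1)) ∈ Win) :
    ∃ f : α → α, (∀ p, A.E p (f p)) ∧
      ∀ ρ, ρ 0 ∈ GameWin0 A Win → ConsWith A 0 (fun _ => f) ρ → ∀ n, ρ n ∈ GameWin0 A Win := by
  have hmove : ∀ p, ∃ u, A.E p u ∧
      (p ∈ GameWin0 A Win → p ∈ A.pos 0 → u ∈ GameWin0 A Win) := by
    intro p
    by_cases hp : p ∈ GameWin0 A Win
    · obtain ⟨σ, hσ, hwin⟩ := hp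
      exact ⟨σ [] p, hσ [] p, fun _ _ => mem_gameWin0_of_edge hWin hσ hwin (hσ [] p) fun _ => rfl⟩
    · obtain ⟨u, hu⟩ := A.succ p
      exact ⟨u, hu, fun h => absurd h hp⟩
  choose f hfE hfW using hmove
  refine ⟨f, hfE, fun ρ h0 hρ n => ?_⟩
  induction n with
  | zero => exact h0
  | succ n ih =>
    by_cases hn : ρ n ∈ A.pos 0
    · rw [hρ.2 n hn]
      exact hfW _ ih hn
    · obtain ⟨σ, hσ, hwin⟩ := ih
      exact mem_gameWin0_of_edge hWin hσ hwin (hρ.1 n) fun h => absurd h hn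

lemma gameWin0_safety_subset (A : Arena α) (S : Set α) : GameWin0 A {ρ | ∀ n, ρ n ∈ S} ⊆ S := by
  rintro v ⟨σ, hσ, hwin⟩
  obtain ⟨ρ, h0, hρ⟩ := exists_consWith A hσ v
  exact h0 ▸ hwin ρ h0 hρ 0

end Plays

section Memory

variable {V M : Type*} (init : V → M) (upd : M → V → M)

lemma memState_append_singleton (w : List V) (a v : V) :
    memState init upd (w ++ [a]) v = upd (memState init upd w a) v := by
  cases w <;> simp [memState, List.foldl_append]

lemma extPlay_succ_snd (ρ : ℕ → V) (n : ℕ) :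
    (extPlay init upd ρ (n + 1)).2 = upd (extPlay init upd ρ n).2 (ρ (n + 1)) := by
  simp only [extPlay, prefixList_succ, memState_append_singleton]

lemma extPlay_snd_eq_foldl (q0 : M) (ρ : ℕ → V) (n : ℕ) :
    (extPlay (upd q0) upd ρ n).2 = (prefixList ρ (n + 1)).foldl upd q0 := by
  induction n with
  | zero => rfl
  | succ n ih => rw [extPlay_succ_snd, ih, prefixList_succ (n := n + 1), List.foldl_append]; rfl

lemma isPlay_extPlay {A : Arena V} {ρ : ℕ → V} (hρ : IsPlay A ρ) :
    IsPlay (prodArena A upd) (extPlay init upd ρ) :=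
  fun n => ⟨hρ n, (extPlay_succ_snd init upd ρ n).symm⟩

lemma consWith_extPlay {A : Arena V} {nxt : V → M → V} {ρ : ℕ → V}
    (hρ : ConsWith A 0 (fun w u => nxt u (memState init upd w u)) ρ) :
    ConsWith (prodArena A upd) 0 (fun _ p => (nxt p.1 p.2, upd p.2 (nxt p.1 p.2)))
      (extPlay init upd ρ) := by
  refine ⟨isPlay_extPlay init upd hρ.1, fun n hn => ?_⟩
  have hmove : ρ (n + 1) = nxt (ρ n) (extPlay init upd ρ n).2 := hρ.2 n hn
  exact Prod.ext hmove (by rw [extPlay_succ_snd, hmove]; rfl)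

lemma eq_extPlay_of_isPlay_prodArena {A : Arena V} {ρ' : ℕ → V × M}
    (hρ' : IsPlay (prodArena A upd) ρ') (h0 : (ρ' 0).2 = init (ρ' 0).1) :
    ρ' = extPlay init upd (Prod.fst ∘ ρ') := by
  funext n
  induction n with
  | zero => exact Prod.ext rfl h0
  | succ n ih =>
    refine Prod.ext rfl ?_
    rw [extPlay_succ_snd, ← ih]
    exact (hρ' n).2.symm

lemma mem_gameWin0_prodArena {A : Arena V} {Win' : Set (ℕ → V × M)} {σ : List V → V → V}
    (hσ : IsStrat A σ) {v : V}
    (hwin : ∀ ρ, ρ 0 = v → ConsWith A 0 σ ρ → extPlay init upd ρ ∈ Win') :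
    (v, init v) ∈ GameWin0 (prodArena A upd) Win' := by
  refine ⟨fun w p => (σ (w.map Prod.fst) p.1, upd p.2 (σ (w.map Prod.fst) p.1)),
    fun w p => ⟨hσ _ _, rfl⟩, fun ρ' h0 hρ' => ?_⟩
  have hcons : ConsWith A 0 σ (Prod.fst ∘ ρ') := by
    refine ⟨fun n => (hρ'.1 n).1, fun n hn => ?_⟩
    rw [← map_prefixList]
    exact congrArg Prod.fst (hρ'.2 n hn)
  rw [eq_extPlay_of_isPlay_prodArena init upd hρ'.1 (by rw [h0])]
  exact hwin _ (by simp [h0]) hcons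

lemma exists_memory_strategy_forall_mem_gameWin0_prodArena (A : Arena V)
    {Win' : Set (ℕ → V × M)} (hWin' : ∀ ρ ∈ Win', (fun n => ρ (n + 1)) ∈ Win') :
    ∃ nxt : V → M → V, (∀ v q, A.E v (nxt v q)) ∧
      ∀ ρ, (ρ 0, init (ρ 0)) ∈ GameWin0 (prodArena A upd) Win' →
        ConsWith A 0 (fun w u => nxt u (memState init upd w u)) ρ →
        ∀ n, extPlay init upd ρ n ∈ GameWin0 (prodArena A upd) Win' := by
  obtain ⟨f, hfE, hf⟩ := exists_positional_forall_mem_gameWin0 (A := prodArena A upd) hWin'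
  refine ⟨fun v q => (f (v, q)).1, fun v q => (hfE (v, q)).1, fun ρ h0 hρ => hf _ h0 ?_⟩
  convert consWith_extPlay init upd (nxt := fun v q => (f (v, q)).1) hρ using 3 with _ p
  exact Prod.ext rfl (hfE p).2.symm

end Memory

theorem safety_reduction_general {Q : Type*} (A : Arena V)
    (Win : Set (ℕ → V)) (q0 : Q) (δ : Q → V → Q) (Facc : Set Q)
    (hL1 : ∀ ρ, IsPlay A ρ →
      (∀ n, (prefixList ρ (n + 1)).foldl δ q0 ∈ Facc) → ρ ∈ Win)
    (hL2 : ∀ v ∈ GameWin0 A Win, ∃ σ, IsStrat A σ ∧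
      ∀ ρ, ρ 0 = v → ConsWith A 0 σ ρ →
        ∀ n, (prefixList ρ (n + 1)).foldl δ q0 ∈ Facc) :
    (∀ v, v ∈ GameWin0 A Win ↔
        (v, δ q0 v) ∈
          GameWin0 (prodArena A δ) {ρ' : ℕ → V × Q | ∀ n, (ρ' n).2 ∈ Facc}) ∧
      ∃ nxt : V → Q → V, (∀ v q, A.E v (nxt v q)) ∧
        ∀ v ∈ GameWin0 A Win, ∀ ρ, ρ 0 = v →
          ConsWith A 0 (fun w u => nxt u (memState (fun x => δ q0 x) δ w u)) ρ →
          ρ ∈ Win := by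
  set W' := GameWin0 (prodArena A δ) {ρ' : ℕ → V × Q | ∀ n, (ρ' n).2 ∈ Facc}
  obtain ⟨nxt, hnxt, hstay⟩ := exists_memory_strategy_forall_mem_gameWin0_prodArena
    (δ q0) δ A (Win' := {ρ' | ∀ n, (ρ' n).2 ∈ Facc}) fun ρ' h n => h (n + 1)
  have hwin : ∀ ρ, (ρ 0, δ q0 (ρ 0)) ∈ W' →
      ConsWith A 0 (fun w u => nxt u (memState (δ q0) δ w u)) ρ → ρ ∈ Win :=
    fun ρ h0 hρ => hL1 ρ hρ.1 fun n => by
      rw [← extPlay_snd_eq_foldl]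
      exact gameWin0_safety_subset (prodArena A δ) {p | p.2 ∈ Facc} (hstay ρ h0 hρ n)
  have hforward : ∀ v ∈ GameWin0 A Win, (v, δ q0 v) ∈ W' := by
    intro v hv
    obtain ⟨σ, hσ, hsafe⟩ := hL2 v hv
    refine mem_gameWin0_prodArena (δ q0) δ hσ fun ρ h0 hρ n => ?_
    rw [extPlay_snd_eq_foldl]
    exact hsafe ρ h0 hρ n
  refine ⟨fun v => ⟨hforward v, fun hv => ?_⟩, nxt, hnxt, fun v hv ρ h0 hρ => ?_⟩
  · exact ⟨_, fun _ _ => hnxt _ _, fun ρ h0 hρ => hwin ρ (h0 ▸ hv) hρ⟩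
  · exact hwin ρ (h0 ▸ hforward v hv) hρ

/-- If the game `(A, Win)` is safety reducible with the language
of the DFA `𝔄 = (Q, V, q0, δ, Facc)`, then, with `G'` the safety game on the
product arena `A × 𝔄` with safe vertices `V × Facc`:
(1) `v ∈ W_0(G)` iff `(v, δ(q0, v)) ∈ W_0(G')`, and
(2) Player 0 has a finite-state winning strategy from `W_0(G)` with memory
states `Q` (with `init v = δ q0 v` and `upd = δ`). -/
theorem safety_reduction {Q : Type*} [Fintype V] [Finite Q] (A : Arena V)
    (Win : Set (ℕ → V)) (q0 : Q) (δ : Q → V → Q) (Facc : Set Q)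
    (hL1 : ∀ ρ, IsPlay A ρ →
      (∀ n, (prefixList ρ (n + 1)).foldl δ q0 ∈ Facc) → ρ ∈ Win)
    (hL2 : ∀ v ∈ GameWin0 A Win, ∃ σ, IsStrat A σ ∧
      ∀ ρ, ρ 0 = v → ConsWith A 0 σ ρ →
        ∀ n, (prefixList ρ (n + 1)).foldl δ q0 ∈ Facc) :
    (∀ v, v ∈ GameWin0 A Win ↔
        (v, δ q0 v) ∈
          GameWin0 (prodArena A δ) {ρ' : ℕ → V × Q | ∀ n, (ρ' n).2 ∈ Facc}) ∧
      ∃ nxt : V → Q → V, (∀ v q, A.E v (nxt v q)) ∧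
        ∀ v ∈ GameWin0 A Win, ∀ ρ, ρ 0 = v →
          ConsWith A 0 (fun w u => nxt u (memState (fun x => δ q0 x) δ w u)) ρ →
          ρ ∈ Win :=
  safety_reduction_general A Win q0 δ Facc hL1 hL2
end
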